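/- arXiv:2009.13478 — 7 statements merged into one kernel-verified Lean document; each statement's English description precedes it below -/
import Mathlib

section
/- Equivalence with the conductivity minimization: assume there exists at least one q₀ ∈ ℝ^m with E q₀ = b. Then the infimum of ℒ(μ) = ℰ(μ) + ½ wᵀμ over the set {μ ∈ ℝ^m : μ_e ≥ 0 for all e} equals the supremum of bᵀu over {u ∈ ℝ^n : |(G u)_e| ≤ 1 for every e} (and hence equals the optimal value of the Beckmann problem). -/
/-!
Weak duality is pointwise: if `|(G u)_e| ≤ 1` and `μ ≥ 0`, then
`uᵀ L[μ] u = ∑ w_e μ_e (G u)_e² ≤ wᵀμ`, so `bᵀu ≤ ℒ(μ)`.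

Conversely, completing the square bounds the energy by that of any flow `q` with `E q = b`:
`ℰ(μ) ≤ ½ ∑ w_e q_e² / μ_e` (Thomson's principle). Taking `μ = |q| + η` and letting `η → 0`
gives `inf ℒ ≤ ∑ w_e |q_e|`, so it remains to close the duality gap of the Beckmann problem.
If no flow of cost `≤ s` carries `b`, separate `b` from the compact convex set
`E {q | ∑ w_e |q_e| ≤ s}` by some `v ⬝ᵥ ·` and a level `c`; testing on the flows `±(s / w_e) 𝟙_e`
gives `s |(G v)_e| < c < v ⬝ᵥ b`, so `(s / c) v` is dual feasible with value `> s`.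
-/

open Matrix

variable {ι κ : Type*} [Fintype ι] [Fintype κ]

def beckmannCost (w q : κ → ℝ) : ℝ := ∑ e, w e * |q e|

section BeckmannCost

variable {w : κ → ℝ}

lemma convexOn_beckmannCost (hw : ∀ e, 0 ≤ w e) : ConvexOn ℝ Set.univ (beckmannCost w) := by
  refine ⟨convex_univ, fun x _ y _ a c ha hc _ => ?_⟩
  simp only [beckmannCost, smul_eq_mul, Finset.mul_sum, ← Finset.sum_add_distrib]
  refine Finset.sum_le_sum fun e _ => ?_
  have htri := abs_add_le (a * x e) (c * y e)
  rw [abs_mul, abs_mul, abs_of_nonneg ha, abs_of_nonneg hc] at htri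
  simp only [Pi.add_apply, Pi.smul_apply, smul_eq_mul]
  nlinarith [mul_le_mul_of_nonneg_left htri (hw e)]

lemma continuous_beckmannCost : Continuous (beckmannCost w) := by
  unfold beckmannCost
  fun_prop

lemma isCompact_beckmannCost_le (hw : ∀ e, 0 < w e) (s : ℝ) :
    IsCompact {q | beckmannCost w q ≤ s} := by
  refine (isCompact_univ_pi fun e => isCompact_Icc (a := -(s / w e)) (b := s / w e))
    |>.of_isClosed_subset (isClosed_le continuous_beckmannCost continuous_const)
    fun q hq e _ => abs_le.1 ((le_div_iff₀' (hw e)).2 ?_)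
  exact (Finset.single_le_sum (fun i _ => mul_nonneg (hw i).le (abs_nonneg (q i)))
    (Finset.mem_univ e)).trans hq

lemma beckmannCost_single [DecidableEq κ] (e : κ) (r : ℝ) :
    beckmannCost w (Pi.single e r) = w e * |r| := by
  rw [beckmannCost, Finset.sum_eq_single e (fun i _ hi => by simp [hi]) (by simp)]
  simp

end BeckmannCost

variable [DecidableEq κ]

noncomputable def jouleEnergy (E : Matrix ι κ ℝ) (G : Matrix κ ι ℝ) (b : ι → ℝ) (μ : κ → ℝ) :
    EReal :=
  ⨆ u : ι → ℝ, ((b ⬝ᵥ u - (1/2) * (u ⬝ᵥ (E * diagonal μ * G) *ᵥ u) : ℝ) : EReal)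

noncomputable def lagrangian (E : Matrix ι κ ℝ) (G : Matrix κ ι ℝ) (b : ι → ℝ) (w μ : κ → ℝ) :
    EReal :=
  jouleEnergy E G b μ + (((1/2) * (w ⬝ᵥ μ) : ℝ) : EReal)

section Duality

variable {E : Matrix ι κ ℝ} {w : κ → ℝ} {G : Matrix κ ι ℝ} {b : ι → ℝ}

lemma transpose_mulVec_apply_eq_mul (hw : ∀ e, w e ≠ 0) (hG : G = (diagonal w)⁻¹ * Eᵀ)
    (u : ι → ℝ) (e : κ) : (Eᵀ *ᵥ u) e = w e * (G *ᵥ u) e := by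
  have hdet : IsUnit (diagonal w).det := by
    rw [det_diagonal, isUnit_iff_ne_zero]
    exact Finset.prod_ne_zero_iff.2 fun e _ => hw e
  rw [← mulVec_diagonal, mulVec_mulVec, hG, mul_nonsing_inv_cancel_left _ _ hdet]

lemma dotProduct_mulVec_eq_sum (hw : ∀ e, w e ≠ 0) (hG : G = (diagonal w)⁻¹ * Eᵀ)
    (u : ι → ℝ) (q : κ → ℝ) : u ⬝ᵥ E *ᵥ q = ∑ e, w e * q e * (G *ᵥ u) e := by
  rw [dotProduct_mulVec, ← mulVec_transpose, dotProduct]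
  exact Finset.sum_congr rfl fun e _ => by rw [transpose_mulVec_apply_eq_mul hw hG]; ring

lemma dotProduct_conductance_mulVec (hw : ∀ e, w e ≠ 0) (hG : G = (diagonal w)⁻¹ * Eᵀ)
    (μ : κ → ℝ) (u : ι → ℝ) :
    u ⬝ᵥ (E * diagonal μ * G) *ᵥ u = ∑ e, w e * μ e * (G *ᵥ u) e ^ 2 := by
  rw [← mulVec_mulVec, ← mulVec_mulVec, dotProduct_mulVec_eq_sum hw hG]
  exact Finset.sum_congr rfl fun e _ => by rw [mulVec_diagonal]; ring

lemma coe_dotProduct_le_lagrangian (hw : ∀ e, 0 < w e) (hG : G = (diagonal w)⁻¹ * Eᵀ)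
    {u : ι → ℝ} (hu : ∀ e, |(G *ᵥ u) e| ≤ 1) {μ : κ → ℝ} (hμ : ∀ e, 0 ≤ μ e) :
    ((b ⬝ᵥ u : ℝ) : EReal) ≤ lagrangian E G b w μ := by
  have hdissipation : u ⬝ᵥ (E * diagonal μ * G) *ᵥ u ≤ w ⬝ᵥ μ := by
    rw [dotProduct_conductance_mulVec (fun e => (hw e).ne') hG, dotProduct]
    refine Finset.sum_le_sum fun e _ => ?_
    have hsq : (G *ᵥ u) e ^ 2 ≤ 1 := sq_le_one_iff_abs_le_one _ |>.2 (hu e)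
    nlinarith [mul_nonneg (hw e).le (hμ e)]
  calc ((b ⬝ᵥ u : ℝ) : EReal)
      ≤ ((b ⬝ᵥ u - (1/2) * (u ⬝ᵥ (E * diagonal μ * G) *ᵥ u) + (1/2) * (w ⬝ᵥ μ) : ℝ) : EReal) := by
        exact_mod_cast (by linarith)
    _ ≤ lagrangian E G b w μ := by
        rw [EReal.coe_add, lagrangian]
        gcongr
        exact le_iSup (fun v : ι → ℝ =>
          ((b ⬝ᵥ v - (1/2) * (v ⬝ᵥ (E * diagonal μ * G) *ᵥ v) : ℝ) : EReal)) u

lemma jouleEnergy_le_of_mulVec_eq (hw : ∀ e, 0 < w e) (hG : G = (diagonal w)⁻¹ * Eᵀ)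
    {μ : κ → ℝ} (hμ : ∀ e, 0 < μ e) {q : κ → ℝ} (hq : E *ᵥ q = b) :
    jouleEnergy E G b μ ≤ ((∑ e, w e * q e ^ 2 / (2 * μ e) : ℝ) : EReal) := by
  refine iSup_le fun u => EReal.coe_le_coe_iff.2 ?_
  rw [← hq, dotProduct_comm, dotProduct_mulVec_eq_sum (fun e => (hw e).ne') hG,
    dotProduct_conductance_mulVec (fun e => (hw e).ne') hG, Finset.mul_sum,
    ← Finset.sum_sub_distrib]
  refine Finset.sum_le_sum fun e _ => ?_
  have hμe := hμ e
  rw [le_div_iff₀ (by positivity)]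
  nlinarith [mul_nonneg (hw e).le (sq_nonneg (q e - μ e * (G *ᵥ u) e))]

lemma lagrangian_le_beckmannCost_add (hw : ∀ e, 0 < w e) (hG : G = (diagonal w)⁻¹ * Eᵀ)
    {q : κ → ℝ} (hq : E *ᵥ q = b) {η : ℝ} (hη : 0 < η) :
    lagrangian E G b w (fun e => |q e| + η) ≤ ((beckmannCost w q + η * ∑ e, w e : ℝ) : EReal) := by
  have hμ : ∀ e, 0 < |q e| + η := fun e => by positivity
  refine (add_le_add_left (jouleEnergy_le_of_mulVec_eq hw hG hμ hq) _).trans ?_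
  rw [← EReal.coe_add, EReal.coe_le_coe_iff, beckmannCost, dotProduct, Finset.mul_sum,
    Finset.mul_sum, ← Finset.sum_add_distrib, ← Finset.sum_add_distrib]
  refine Finset.sum_le_sum fun e _ => ?_
  have hwe := hw e
  have hqe : q e ^ 2 / (|q e| + η) ≤ |q e| := by
    rw [div_le_iff₀ (hμ e), ← sq_abs]
    nlinarith [abs_nonneg (q e)]
  have hsplit : w e * q e ^ 2 / (2 * (|q e| + η)) = w e * (q e ^ 2 / (|q e| + η)) / 2 := by
    rw [mul_comm 2, ← div_div, mul_div_assoc]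
  rw [hsplit]
  nlinarith [mul_le_mul_of_nonneg_left hqe hwe.le, mul_pos hwe hη]

lemma iInf_lagrangian_le_beckmannCost (hw : ∀ e, 0 < w e) (hG : G = (diagonal w)⁻¹ * Eᵀ)
    {q : κ → ℝ} (hq : E *ᵥ q = b) :
    ⨅ μ : {μ : κ → ℝ // ∀ e, 0 ≤ μ e}, lagrangian E G b w μ ≤ ((beckmannCost w q : ℝ) : EReal) := by
  refine EReal.le_of_forall_lt_iff_le.1 fun z hz => ?_
  have hz' : beckmannCost w q < z := EReal.coe_lt_coe_iff.1 hz
  have hW : 0 ≤ ∑ e, w e := Finset.sum_nonneg fun e _ => (hw e).le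
  set η := (z - beckmannCost w q) / (∑ e, w e + 1)
  have hη : 0 < η := div_pos (by linarith) (by linarith)
  have hηW : η * ∑ e, w e ≤ z - beckmannCost w q :=
    calc η * ∑ e, w e ≤ η * (∑ e, w e + 1) := by linarith
      _ = z - beckmannCost w q := div_mul_cancel₀ _ (by linarith)
  calc _ ≤ lagrangian E G b w (fun e => |q e| + η) :=
        iInf_le_of_le ⟨fun e => |q e| + η, fun e => by positivity⟩ le_rfl
    _ ≤ ((beckmannCost w q + η * ∑ e, w e : ℝ) : EReal) :=
        lagrangian_le_beckmannCost_add hw hG hq hη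
    _ ≤ z := EReal.coe_le_coe_iff.2 (by linarith)

lemma mul_abs_mulVec_lt_of_beckmannCost_le (hw : ∀ e, 0 < w e) (hG : G = (diagonal w)⁻¹ * Eᵀ)
    {s c : ℝ} (hs : 0 ≤ s) {v : ι → ℝ} (hv : ∀ q, beckmannCost w q ≤ s → v ⬝ᵥ E *ᵥ q < c)
    (e : κ) : s * |(G *ᵥ v) e| < c := by
  have hws : w e * (s / w e) = s := mul_div_cancel₀ s (hw e).ne'
  have hsw : 0 ≤ s / w e := div_nonneg hs (hw e).le
  have hflux : ∀ r, |r| = s / w e → w e * r * (G *ᵥ v) e < c := fun r hr => by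
    have := hv (Pi.single e r) (by rw [beckmannCost_single, hr, hws])
    rwa [dotProduct_mulVec_eq_sum (fun e => (hw e).ne') hG,
      Finset.sum_eq_single e (fun i _ hi => by simp [hi]) (by simp), Pi.single_eq_same] at this
  have hpos := hflux (s / w e) (abs_of_nonneg hsw)
  have hneg := hflux (-(s / w e)) (by rw [abs_neg, abs_of_nonneg hsw])
  rw [hws] at hpos
  rw [mul_neg, hws] at hneg
  rw [← abs_of_nonneg hs, ← abs_mul]
  exact abs_lt.2 ⟨by linarith, hpos⟩

theorem exists_beckmannCost_le_of_dual_le (hw : ∀ e, 0 < w e)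
    (hG : G = (diagonal w)⁻¹ * Eᵀ) {s : ℝ} (hs : 0 < s)
    (hdual : ∀ u, (∀ e, |(G *ᵥ u) e| ≤ 1) → b ⬝ᵥ u ≤ s) :
    ∃ q, E *ᵥ q = b ∧ beckmannCost w q ≤ s := by
  classical
  by_contra! hb
  have hbK : b ∉ mulVecLin E '' {q | beckmannCost w q ≤ s} := by
    rintro ⟨q, hcost, hqb⟩
    exact (hb q hqb).not_ge hcost
  have hconv : Convex ℝ {q | beckmannCost w q ≤ s} := by
    simpa using (convexOn_beckmannCost fun e => (hw e).le).convex_le s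
  obtain ⟨f, c, hfK, hcb⟩ := geometric_hahn_banach_closed_point (hconv.linear_image (mulVecLin E))
    ((isCompact_beckmannCost_le hw s).image (mulVecLin E).continuous_of_finiteDimensional).isClosed
    hbK
  obtain ⟨v, hfv⟩ : ∃ v, ∀ y, f y = v ⬝ᵥ y := ⟨(dotProductEquiv ℝ ι).symm f, fun y => by
    rw [← dotProductEquiv_apply_apply, LinearEquiv.apply_symm_apply]
    rfl⟩
  have hc : 0 < c := by
    simpa [hfv] using hfK 0 ⟨0, by simp [beckmannCost, hs.le], map_zero _⟩
  have hedge : ∀ e, s * |(G *ᵥ v) e| < c :=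
    mul_abs_mulVec_lt_of_beckmannCost_le hw hG hs.le fun q hq => by
      simpa [hfv] using hfK _ ⟨q, hq, rfl⟩
  have hfeas : ∀ e, |(G *ᵥ (s / c) • v) e| ≤ 1 := fun e => by
    rw [mulVec_smul, Pi.smul_apply, smul_eq_mul, abs_mul, abs_of_pos (div_pos hs hc),
      div_mul_eq_mul_div, div_le_one hc]
    exact (hedge e).le
  have hle := hdual _ hfeas
  rw [dotProduct_smul, smul_eq_mul, dotProduct_comm, ← hfv] at hle
  have hlt : s < s / c * f b := by
    rw [div_mul_eq_mul_div, lt_div_iff₀ hc]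
    nlinarith
  linarith

end Duality

theorem conductivity_minimization_equiv_general {n m : ℕ}
    (E : Matrix (Fin n) (Fin m) ℝ) (w : Fin m → ℝ) (hw : ∀ e, 0 < w e)
    (b : Fin n → ℝ)
    (G : Matrix (Fin m) (Fin n) ℝ) (hG : G = (Matrix.diagonal w)⁻¹ * Eᵀ)
    (L : (Fin m → ℝ) → Matrix (Fin n) (Fin n) ℝ)
    (hL : ∀ μ, L μ = E * Matrix.diagonal μ * G)
    (Ene : (Fin m → ℝ) → EReal)
    (hEne : ∀ μ, Ene μ =
      ⨆ u : Fin n → ℝ, ((b ⬝ᵥ u - (1/2) * (u ⬝ᵥ (L μ).mulVec u) : ℝ) : EReal)) :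
    (⨅ μ : {μ : Fin m → ℝ // ∀ e, 0 ≤ μ e},
        Ene μ.1 + (((1/2) * (w ⬝ᵥ μ.1) : ℝ) : EReal)) =
      ⨆ u : {u : Fin n → ℝ // ∀ e, |G.mulVec u e| ≤ 1}, ((b ⬝ᵥ u.1 : ℝ) : EReal) := by
  obtain rfl : Ene = jouleEnergy E G b := funext fun μ => by rw [hEne, hL]; rfl
  refine le_antisymm ?_
    (iSup_le fun u => le_iInf fun μ => coe_dotProduct_le_lagrangian hw hG u.2 μ.2)
  refine EReal.le_of_forall_lt_iff_le.1 fun z hz => ?_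
  have hdual : ∀ u, (∀ e, |(G *ᵥ u) e| ≤ 1) → ((b ⬝ᵥ u : ℝ) : EReal) < z :=
    fun u hu => lt_of_le_of_lt (le_iSup_of_le ⟨u, hu⟩ le_rfl) hz
  have hz_pos : 0 < z := by simpa using hdual 0 (by simp)
  obtain ⟨q, hq, hqz⟩ := exists_beckmannCost_le_of_dual_le hw hG hz_pos
    fun u hu => (EReal.coe_lt_coe_iff.1 (hdual u hu)).le
  exact (iInf_lagrangian_le_beckmannCost hw hG hq).trans (EReal.coe_le_coe_iff.2 hqz)

/-- Equivalence with the conductivity minimization: if the Beckmann problem is feasible,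
the infimum of `ℒ(μ) = ℰ(μ) + ½ wᵀμ` over the nonnegative orthant equals the supremum of
`bᵀu` over the dual feasible set `{u : |(G u)_e| ≤ 1 ∀ e}`. The Joule energy
`ℰ(μ) = sup_u (bᵀu − ½ uᵀ L[μ] u)` takes values in `ℝ ∪ {+∞}`, modelled by `EReal`. -/
theorem conductivity_minimization_equiv {n m : ℕ} (hn : 0 < n) (hm : 0 < m)
    (E : Matrix (Fin n) (Fin m) ℝ) (w : Fin m → ℝ) (hw : ∀ e, 0 < w e)
    (b : Fin n → ℝ)
    (G : Matrix (Fin m) (Fin n) ℝ) (hG : G = (Matrix.diagonal w)⁻¹ * Eᵀ)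
    (L : (Fin m → ℝ) → Matrix (Fin n) (Fin n) ℝ)
    (hL : ∀ μ, L μ = E * Matrix.diagonal μ * G)
    (Ene : (Fin m → ℝ) → EReal)
    (hEne : ∀ μ, Ene μ =
      ⨆ u : Fin n → ℝ, ((b ⬝ᵥ u - (1/2) * (u ⬝ᵥ (L μ).mulVec u) : ℝ) : EReal))
    (hfeas : ∃ q₀ : Fin m → ℝ, E.mulVec q₀ = b) :
    (⨅ μ : {μ : Fin m → ℝ // ∀ e, 0 ≤ μ e},
        Ene μ.1 + (((1/2) * (w ⬝ᵥ μ.1) : ℝ) : EReal)) =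
      ⨆ u : {u : Fin n → ℝ // ∀ e, |G.mulVec u e| ≤ 1}, ((b ⬝ᵥ u.1 : ℝ) : EReal) :=
  conductivity_minimization_equiv_general E w hw b G hG L hL Ene hEne
end

section
/- KKT sufficiency for the graph optimal transport problem: let μ* ∈ ℝ^m with μ*_e ≥ 0 for all e and u* ∈ ℝ^n satisfy (i) L[μ*] u* = b, (ii) |(G u*)_e| ≤ 1 for every e, and (iii) |(G u*)_e| = 1 whenever μ*_e > 0. Set q* = μ* ⊙ (G u*) (componentwise product). Then E q* = b, q* is a minimizer of the Beckmann problem, and u* is a maximizer of the dual problem; moreover Σ_e w_e|q*_e| = bᵀu*. -/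
open Matrix BigOperators

lemma dot_swap {n m : ℕ} (E : Matrix (Fin n) (Fin m) ℝ) (q : Fin m → ℝ) (u : Fin n → ℝ) :
    (∑ e, q e * Eᵀ.mulVec u e) = E.mulVec q ⬝ᵥ u := by
  have : (∑ e, q e * Eᵀ.mulVec u e) = q ⬝ᵥ Eᵀ.mulVec u := rfl
  rw [this, Matrix.dotProduct_mulVec, Matrix.vecMul_transpose]

/-- KKT sufficiency for the graph optimal transport problem: if `μ* ≥ 0` and `u*` satisfy
`L[μ*] u* = b`, `|(G u*)_e| ≤ 1` everywhere and `|(G u*)_e| = 1` whenever `μ*_e > 0`,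
then `q* = μ* ⊙ (G u*)` is primal feasible and optimal, `u*` is dual optimal, and the
duality gap vanishes. Here `G = W⁻¹Eᵀ`, `L[μ] = E Diag(μ) G`. -/
theorem kkt_sufficiency {n m : ℕ} (hn : 0 < n) (hm : 0 < m)
    (E : Matrix (Fin n) (Fin m) ℝ) (w : Fin m → ℝ) (hw : ∀ e, 0 < w e)
    (b : Fin n → ℝ)
    (G : Matrix (Fin m) (Fin n) ℝ) (hG : G = (Matrix.diagonal w)⁻¹ * Eᵀ)
    (μs : Fin m → ℝ) (us : Fin n → ℝ)
    (hμs : ∀ e, 0 ≤ μs e)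
    (h1 : (E * Matrix.diagonal μs * G).mulVec us = b)
    (h2 : ∀ e, |G.mulVec us e| ≤ 1)
    (h3 : ∀ e, 0 < μs e → |G.mulVec us e| = 1)
    (qs : Fin m → ℝ) (hqs : qs = fun e => μs e * G.mulVec us e) :
    E.mulVec qs = b ∧
    (∀ q' : Fin m → ℝ, E.mulVec q' = b → (∑ e, w e * |qs e|) ≤ ∑ e, w e * |q' e|) ∧
    (∀ u' : Fin n → ℝ, (∀ e, |G.mulVec u' e| ≤ 1) → b ⬝ᵥ u' ≤ b ⬝ᵥ us) ∧
    (∑ e, w e * |qs e|) = b ⬝ᵥ us := by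
  -- G computed pointwise
  have hwne : ∀ e, w e ≠ 0 := fun e => (hw e).ne'
  have hGinv : (Matrix.diagonal w)⁻¹ = Matrix.diagonal (fun e => (w e)⁻¹) := by
    apply Matrix.inv_eq_right_inv
    have hone : (fun i => w i * (w i)⁻¹) = fun _ : Fin m => (1 : ℝ) := by
      funext i; exact mul_inv_cancel₀ (hwne i)
    rw [Matrix.diagonal_mul_diagonal, hone, Matrix.diagonal_one]
  have hGpt : ∀ (u : Fin n → ℝ) (e : Fin m),
      G.mulVec u e = (w e)⁻¹ * Eᵀ.mulVec u e := by
    intro u e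
    rw [hG, ← Matrix.mulVec_mulVec, hGinv]
    simp [Matrix.mulVec_diagonal]
  have hwG : ∀ (u : Fin n → ℝ) (e : Fin m), w e * G.mulVec u e = Eᵀ.mulVec u e := by
    intro u e
    rw [hGpt, ← mul_assoc, mul_inv_cancel₀ (hwne e), one_mul]
  -- primal feasibility
  have hfeas : E.mulVec qs = b := by
    have hDG : (Matrix.diagonal μs).mulVec (G.mulVec us) = fun e => μs e * G.mulVec us e := by
      funext e; simp [Matrix.mulVec_diagonal]
    rw [← h1, hqs, Matrix.mul_assoc, ← Matrix.mulVec_mulVec, ← Matrix.mulVec_mulVec, hDG]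
  -- key identity: ∑ w e |qs e| = b ⬝ᵥ us
  have hkey : (∑ e, w e * |qs e|) = b ⬝ᵥ us := by
    have : (∑ e, w e * |qs e|) = ∑ e, qs e * Eᵀ.mulVec us e := by
      apply Finset.sum_congr rfl
      intro e _
      rw [← hwG us e, hqs]
      simp only
      rcases eq_or_lt_of_le (hμs e) with h | h
      · simp [← h]
      · have hsq : G.mulVec us e * G.mulVec us e = 1 := by
          have h4 := sq_abs (G.mulVec us e)
          nlinarith [h3 e h]
        rw [abs_mul, abs_of_pos h, h3 e h]
        have hr : μs e * G.mulVec us e * (w e * G.mulVec us e)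
            = w e * μs e * (G.mulVec us e * G.mulVec us e) := by ring
        rw [hr, hsq]
        ring
    rw [this, dot_swap, hfeas]
  refine ⟨hfeas, ?_, ?_, hkey⟩
  · -- primal optimality via weak duality
    intro q' hq'
    rw [hkey, ← hq', ← dot_swap]
    apply Finset.sum_le_sum
    intro e _
    rw [← hwG us e]
    calc q' e * (w e * G.mulVec us e) ≤ |q' e * (w e * G.mulVec us e)| := le_abs_self _
      _ = w e * |q' e| * |G.mulVec us e| := by
          rw [abs_mul, abs_mul, abs_of_pos (hw e)]; ring
      _ ≤ w e * |q' e| * 1 := by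
          exact mul_le_mul_of_nonneg_left (h2 e) (mul_nonneg (hw e).le (abs_nonneg _))
      _ = w e * |q' e| := by ring
  · -- dual optimality
    intro u' hu'
    rw [← hkey, ← hfeas, ← dot_swap]
    apply Finset.sum_le_sum
    intro e _
    rw [← hwG u' e]
    calc qs e * (w e * G.mulVec u' e) ≤ |qs e * (w e * G.mulVec u' e)| := le_abs_self _
      _ = w e * |qs e| * |G.mulVec u' e| := by
          rw [abs_mul, abs_mul, abs_of_pos (hw e)]; ring
      _ ≤ w e * |qs e| * 1 := by
          exact mul_le_mul_of_nonneg_left (hu' e) (mul_nonneg (hw e).le (abs_nonneg _))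
      _ = w e * |qs e| := by ring
end

section
/- Subgradient inequality for the Joule energy: let μ ∈ ℝ^m have nonnegative entries and let u ∈ ℝ^n satisfy L[μ] u = b. Then ℰ(μ) = ½ bᵀu, and for every μ' ∈ ℝ^m with nonnegative entries, ℰ(μ') ≥ ℰ(μ) − ½ Σ_{e=1}^m w_e ((G u)_e)² (μ'_e − μ_e); that is, the vector with entries −(w_e/2)((G u)_e)² is a subgradient of ℰ at μ. -/
open Matrix BigOperators

/-- Subgradient inequality for the Joule energy: if `μ ≥ 0` and `L[μ] u = b`, then
`ℰ(μ) = ½ bᵀu`, and for every `μ' ≥ 0`,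
`ℰ(μ') ≥ ℰ(μ) − ½ Σ_e w_e ((G u)_e)² (μ'_e − μ_e)`. Here `G = W⁻¹Eᵀ`,
`L[μ] = E Diag(μ) G`, and `ℰ(μ) = sup_u (bᵀu − ½ uᵀ L[μ] u)` is valued in `EReal`. -/
theorem joule_energy_subgradient {n m : ℕ} (hn : 0 < n) (hm : 0 < m)
    (E : Matrix (Fin n) (Fin m) ℝ) (w : Fin m → ℝ) (hw : ∀ e, 0 < w e)
    (b : Fin n → ℝ)
    (G : Matrix (Fin m) (Fin n) ℝ) (hG : G = (Matrix.diagonal w)⁻¹ * Eᵀ)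
    (L : (Fin m → ℝ) → Matrix (Fin n) (Fin n) ℝ)
    (hL : ∀ μ, L μ = E * Matrix.diagonal μ * G)
    (Ene : (Fin m → ℝ) → EReal)
    (hEne : ∀ μ, Ene μ =
      ⨆ u' : Fin n → ℝ, ((b ⬝ᵥ u' - (1/2) * (u' ⬝ᵥ (L μ).mulVec u') : ℝ) : EReal))
    (μ : Fin m → ℝ) (hμ : ∀ e, 0 ≤ μ e)
    (u : Fin n → ℝ) (hu : (L μ).mulVec u = b) :
    Ene μ = (((1/2) * (b ⬝ᵥ u) : ℝ) : EReal) ∧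
    ∀ μ' : Fin m → ℝ, (∀ e, 0 ≤ μ' e) →
      (((1/2) * (b ⬝ᵥ u)
        - (1/2) * ∑ e, w e * (G.mulVec u e)^2 * (μ' e - μ e) : ℝ) : EReal) ≤ Ene μ' := by
  -- entrywise description of G
  have hGv : ∀ (v : Fin n → ℝ) (e : Fin m), w e * G.mulVec v e = Eᵀ.mulVec v e := by
    intro v e
    have hdiag : (Matrix.diagonal w)⁻¹ = Matrix.diagonal (fun e => (w e)⁻¹) := by
      apply Matrix.inv_eq_right_inv
      rw [Matrix.diagonal_mul_diagonal]
      rw [show (fun i => w i * (w i)⁻¹) = fun _ => (1 : ℝ) from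
        funext fun i => mul_inv_cancel₀ (hw i).ne', Matrix.diagonal_one]
    have : G.mulVec v = (Matrix.diagonal fun e => (w e)⁻¹).mulVec (Eᵀ.mulVec v) := by
      rw [hG, hdiag, Matrix.mulVec_mulVec]
    rw [this, Matrix.mulVec_diagonal, ← mul_assoc, mul_inv_cancel₀ (hw e).ne', one_mul]
  -- key quadratic-form identity
  have key : ∀ (ν : Fin m → ℝ) (v v' : Fin n → ℝ),
      v ⬝ᵥ (L ν).mulVec v' = ∑ e, ν e * w e * G.mulVec v e * G.mulVec v' e := by
    intro ν v v'
    rw [hL, Matrix.mul_assoc, ← Matrix.mulVec_mulVec, ← Matrix.mulVec_mulVec,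
      Matrix.dotProduct_mulVec, ← Matrix.mulVec_transpose]
    unfold dotProduct
    apply Finset.sum_congr rfl
    intro e _
    rw [Matrix.mulVec_diagonal, ← hGv v e]
    ring
  have hbv : ∀ v : Fin n → ℝ, b ⬝ᵥ v = ∑ e, μ e * w e * G.mulVec v e * G.mulVec u e := by
    intro v
    rw [← hu, dotProduct_comm, key]
  have hbu : b ⬝ᵥ u = ∑ e, μ e * w e * G.mulVec u e * G.mulVec u e := hbv u
  -- upper bound for the objective at μ
  have hfle : ∀ v : Fin n → ℝ,
      b ⬝ᵥ v - (1/2) * (v ⬝ᵥ (L μ).mulVec v) ≤ (1/2) * (b ⬝ᵥ u) := by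
    intro v
    have hnn : 0 ≤ ∑ e, μ e * w e * (G.mulVec u e - G.mulVec v e)^2 :=
      Finset.sum_nonneg fun e _ =>
        mul_nonneg (mul_nonneg (hμ e) (hw e).le) (sq_nonneg _)
    have hexp : ∑ e, μ e * w e * (G.mulVec u e - G.mulVec v e)^2
        = (∑ e, μ e * w e * G.mulVec u e * G.mulVec u e)
          - 2 * (∑ e, μ e * w e * G.mulVec v e * G.mulVec u e)
          + ∑ e, μ e * w e * G.mulVec v e * G.mulVec v e := by
      rw [Finset.mul_sum, ← Finset.sum_sub_distrib, ← Finset.sum_add_distrib]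
      apply Finset.sum_congr rfl
      intro e _
      ring
    rw [hbv v, key, hbu]
    linarith [hexp ▸ hnn]
  have hfu : b ⬝ᵥ u - (1/2) * (u ⬝ᵥ (L μ).mulVec u) = (1/2) * (b ⬝ᵥ u) := by
    rw [hu, dotProduct_comm]
    ring
  constructor
  · rw [hEne]
    apply le_antisymm
    · exact iSup_le fun v => EReal.coe_le_coe_iff.mpr (hfle v)
    · calc (((1/2) * (b ⬝ᵥ u) : ℝ) : EReal)
          = ((b ⬝ᵥ u - (1/2) * (u ⬝ᵥ (L μ).mulVec u) : ℝ) : EReal) := by rw [hfu]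
        _ ≤ _ := le_iSup (fun u' : Fin n → ℝ =>
            ((b ⬝ᵥ u' - (1/2) * (u' ⬝ᵥ (L μ).mulVec u') : ℝ) : EReal)) u
  · intro μ' hμ'
    have hsum : ∑ e, w e * (G.mulVec u e)^2 * (μ' e - μ e)
        = (∑ e, μ' e * w e * G.mulVec u e * G.mulVec u e)
          - ∑ e, μ e * w e * G.mulVec u e * G.mulVec u e := by
      rw [← Finset.sum_sub_distrib]
      apply Finset.sum_congr rfl
      intro e _
      ring
    have heq : ((1/2) * (b ⬝ᵥ u)
        - (1/2) * ∑ e, w e * (G.mulVec u e)^2 * (μ' e - μ e) : ℝ)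
        = b ⬝ᵥ u - (1/2) * (u ⬝ᵥ (L μ').mulVec u) := by
      rw [hsum, key, hbu]
      ring
    rw [hEne, heq]
    exact le_iSup (fun u' : Fin n → ℝ =>
      ((b ⬝ᵥ u' - (1/2) * (u' ⬝ᵥ (L μ').mulVec u') : ℝ) : EReal)) u
end

section
/- Gradient of the transformed Lyapunov functional (eq. (3.5) with Ψ(σ) = σ²/4): assume b lies in the range of E and let σ ∈ ℝ^m with σ_e ≠ 0 for every e; set μ = σ²/4 componentwise and let u ∈ ℝ^n be any solution of L[μ] u = b. Then the function 𝓛̂(σ') = sup_{u' ∈ ℝ^n} ( bᵀu' − ½ u'ᵀ L[σ'²/4] u' ) + (1/8) Σ_e w_e σ'_e², defined for σ' near σ, is differentiable at σ with gradient entries ∂𝓛̂/∂σ_e = (w_e σ_e / 4) ( 1 − ((G u)_e)² ) for e = 1,…,m. -/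
/-!
Write `L[μ] = E Diag(μ / w) Eᵀ` and `b = E q`. For `σ'` with no zero entry this matrix is positive
semidefinite with kernel `ker Eᵀ`, so the supremum is attained at any solution of `L x = b` and
equals `½ bᵀx`. Adding the orthogonal projection `P` onto `ker Eᵀ` gives an invertible matrix
`N = L + P`, and `x = N⁻¹ b` solves `L x = b` because `P x ∈ ker Eᵀ` is orthogonal to
`b - L x ∈ range E`. Hence near `σ` the functional is `½ bᵀ N⁻¹ b + ⅛ Σ w σ'²`, which is
differentiable by the formula for the derivative of the inverse:
`∂(bᵀN⁻¹b)/∂c_e = -((Eᵀx)_e)²` for the diagonal weights `c_e = σ_e² / (4 w_e)`. Finally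
`G u = Diag(w)⁻¹ Eᵀ x` because `L u = L x` forces `Eᵀ u = Eᵀ x`.
-/

open Matrix Filter Topology

-- The operator norm makes square matrices a complete normed algebra, where the inverse is
-- differentiable; any norm gives the same derivatives.
attribute [local instance] Matrix.linftyOpNormedAddCommGroup Matrix.linftyOpNormedSpace
  Matrix.linftyOpNormedRing Matrix.linftyOpNormedAlgebra

namespace Matrix

variable {ι κ : Type*} [Fintype κ] [DecidableEq κ]

theorem exists_posSemidef_projection_ker (A : Matrix ι κ ℝ) :
    ∃ P : Matrix κ κ ℝ, P.PosSemidef ∧ A * P = 0 ∧ ∀ x, A *ᵥ x = 0 → P *ᵥ x = x := by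
  let K := LinearMap.ker (toEuclideanLin A)
  let P := toEuclideanLin.symm K.starProjection.toLinearMap
  have hP : toEuclideanLin P = K.starProjection.toLinearMap := toEuclideanLin.apply_symm_apply _
  have hPx (x : κ → ℝ) : P *ᵥ x = WithLp.ofLp (K.starProjection (WithLp.toLp 2 x)) := by
    rw [← ContinuousLinearMap.coe_coe, ← hP]; rfl
  refine ⟨P, ?_, ext_iff_mulVec.mpr fun x => ?_, fun x hx => ?_⟩
  · rw [← isPositive_toEuclideanLin_iff, hP]
    exact K.isSymmetricProjection_starProjection.isPositive
  · rw [← mulVec_mulVec, hPx, zero_mulVec]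
    exact congrArg WithLp.ofLp (K.starProjection_apply_mem (WithLp.toLp 2 x))
  · rw [hPx, Submodule.starProjection_eq_self_iff.mpr]
    simp [K, hx]

theorem inv_diagonal_eq_diagonal_inv {w : κ → ℝ} (hw : ∀ e, w e ≠ 0) :
    (diagonal w)⁻¹ = diagonal w⁻¹ :=
  inv_eq_left_inv (by simp [diagonal_mul_diagonal, hw])

theorem inv_diagonal_mul_mulVec [Fintype ι] {w : κ → ℝ} (hw : ∀ e, w e ≠ 0) (A : Matrix κ ι ℝ)
    (x : ι → ℝ) : ((diagonal w)⁻¹ * A) *ᵥ x = fun e => (A *ᵥ x) e / w e := by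
  rw [inv_diagonal_eq_diagonal_inv hw, ← mulVec_mulVec]
  ext e
  simp [mulVec_diagonal, div_eq_inv_mul]

def weightedGram (E : Matrix ι κ ℝ) (c : κ → ℝ) : Matrix ι ι ℝ :=
  E * diagonal c * Eᵀ

theorem weightedGram_transpose (E : Matrix ι κ ℝ) (c : κ → ℝ) :
    (weightedGram E c)ᵀ = weightedGram E c := by
  simp [weightedGram, transpose_mul, Matrix.mul_assoc]

theorem mul_diagonal_mul_inv_diagonal_mul_transpose (E : Matrix ι κ ℝ) {w : κ → ℝ}
    (hw : ∀ e, w e ≠ 0) (d : κ → ℝ) :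
    E * diagonal d * ((diagonal w)⁻¹ * Eᵀ) = weightedGram E fun e => d e / w e := by
  rw [inv_diagonal_eq_diagonal_inv hw, ← Matrix.mul_assoc, Matrix.mul_assoc E,
    diagonal_mul_diagonal]
  rfl

variable [Fintype ι]

noncomputable def dotProductMulVecCLM (x y : ι → ℝ) : Matrix ι ι ℝ →L[ℝ] ℝ :=
  LinearMap.toContinuousLinearMap
    { toFun M := x ⬝ᵥ M *ᵥ y
      map_add' M M' := by simp [add_mulVec, dotProduct_add]
      map_smul' r M := by simp [smul_mulVec, dotProduct_smul] }

theorem _root_.HasFDerivAt.dotProduct_nonsing_inv_mulVec [DecidableEq ι] {X : Type*}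
    [NormedAddCommGroup X] [NormedSpace ℝ X] {N : X → Matrix ι ι ℝ} {N' : X →L[ℝ] Matrix ι ι ℝ}
    {s : X} (hN : HasFDerivAt N N' s) (hunit : IsUnit (N s)) (hsymm : (N s)ᵀ = N s)
    (b : ι → ℝ) :
    HasFDerivAt (fun t => b ⬝ᵥ (N t)⁻¹ *ᵥ b)
      (-(dotProductMulVecCLM ((N s)⁻¹ *ᵥ b) ((N s)⁻¹ *ᵥ b) ∘L N')) s := by
  have hinv : HasFDerivAt (fun M : Matrix ι ι ℝ => M⁻¹)
      (-ContinuousLinearMap.mulLeftRight ℝ _ (N s)⁻¹ (N s)⁻¹) (N s) := by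
    have h := hasFDerivAt_ringInverse (𝕜 := ℝ) hunit.unit
    rw [← Ring.inverse_unit, hunit.unit_spec, ← nonsing_inv_eq_ringInverse] at h
    exact h.congr_of_eventuallyEq (.of_forall nonsing_inv_eq_ringInverse)
  refine ((dotProductMulVecCLM b b).hasFDerivAt.comp s (hinv.comp s hN)).congr_fderiv ?_
  ext h
  have hsymm' : (N s)⁻¹ᵀ = (N s)⁻¹ := by rw [transpose_nonsing_inv, hsymm]
  change b ⬝ᵥ (-((N s)⁻¹ * N' h * (N s)⁻¹)) *ᵥ b = _
  rw [neg_mulVec, dotProduct_neg, ← mulVec_mulVec, ← mulVec_mulVec, dotProduct_mulVec,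
    ← mulVec_transpose, hsymm']
  rfl

theorem PosSemidef.isGreatest_dotProduct_sub_half_dotProduct_mulVec {A : Matrix ι ι ℝ}
    (hA : A.PosSemidef) {b x : ι → ℝ} (hx : A *ᵥ x = b) :
    IsGreatest (Set.range fun u => b ⬝ᵥ u - 1 / 2 * (u ⬝ᵥ A *ᵥ u)) (1 / 2 * (b ⬝ᵥ x)) := by
  have hAt : Aᵀ = A := by simpa using hA.isHermitian.eq
  refine ⟨⟨x, show b ⬝ᵥ x - 1 / 2 * (x ⬝ᵥ A *ᵥ x) = _ by rw [hx, dotProduct_comm]; ring⟩, ?_⟩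
  rintro _ ⟨u, rfl⟩
  have hxu : x ⬝ᵥ A *ᵥ u = b ⬝ᵥ u := by rw [dotProduct_mulVec, ← mulVec_transpose, hAt, hx]
  have key := hA.dotProduct_mulVec_nonneg (u - x)
  simp only [star_trivial, mulVec_sub, sub_dotProduct, dotProduct_sub, hx, hxu] at key
  rw [dotProduct_comm u b, dotProduct_comm x b] at key
  linarith

variable {E : Matrix ι κ ℝ} {c : κ → ℝ}

theorem dotProduct_weightedGram_mulVec (E : Matrix ι κ ℝ) (c : κ → ℝ) (x y : ι → ℝ) :
    x ⬝ᵥ weightedGram E c *ᵥ y = ∑ e, c e * ((Eᵀ *ᵥ x) e * (Eᵀ *ᵥ y) e) := by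
  rw [weightedGram, ← mulVec_mulVec, ← mulVec_mulVec, dotProduct_mulVec, ← mulVec_transpose]
  simp only [dotProduct, mulVec_diagonal]
  exact Finset.sum_congr rfl fun e _ => by ring

theorem posSemidef_weightedGram (hc : 0 ≤ c) : (weightedGram E c).PosSemidef := by
  simpa [weightedGram] using (PosSemidef.diagonal hc).mul_mul_conjTranspose_same E

theorem dotProduct_weightedGram_mulVec_self_eq_zero_iff (hc : ∀ e, 0 < c e) {x : ι → ℝ} :
    x ⬝ᵥ weightedGram E c *ᵥ x = 0 ↔ Eᵀ *ᵥ x = 0 := by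
  rw [dotProduct_weightedGram_mulVec, Finset.sum_eq_zero_iff_of_nonneg fun e _ =>
    mul_nonneg (hc e).le (mul_self_nonneg _), funext_iff]
  simp [(hc _).ne']

theorem transpose_mulVec_eq_of_weightedGram_mulVec_eq (hc : ∀ e, 0 < c e) {x y : ι → ℝ}
    (h : weightedGram E c *ᵥ x = weightedGram E c *ᵥ y) : Eᵀ *ᵥ x = Eᵀ *ᵥ y := by
  rw [← sub_eq_zero, ← mulVec_sub, ← dotProduct_weightedGram_mulVec_self_eq_zero_iff hc,
    mulVec_sub, h, sub_self, dotProduct_zero]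

theorem posDef_weightedGram_add (hc : ∀ e, 0 < c e) {P : Matrix ι ι ℝ} (hP : P.PosSemidef)
    (hPker : ∀ x, Eᵀ *ᵥ x = 0 → P *ᵥ x = x) : (weightedGram E c + P).PosDef := by
  have hL := posSemidef_weightedGram (E := E) fun e => (hc e).le
  refine .of_dotProduct_mulVec_pos (hL.isHermitian.add hP.isHermitian) fun x hx => ?_
  have hLx := hL.dotProduct_mulVec_nonneg x
  have hPx := hP.dotProduct_mulVec_nonneg x
  rw [add_mulVec, dotProduct_add]
  by_cases hEx : Eᵀ *ᵥ x = 0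
  · rw [hPker x hEx] at hPx ⊢
    linarith [dotProduct_star_self_pos_iff.mpr hx]
  · have hLx_ne : star x ⬝ᵥ weightedGram E c *ᵥ x ≠ 0 :=
      (dotProduct_weightedGram_mulVec_self_eq_zero_iff hc).not.mpr hEx
    linarith [lt_of_le_of_ne hLx hLx_ne.symm]

theorem weightedGram_mulVec_eq_of_add_mulVec_eq {P : Matrix ι ι ℝ} (hEP : Eᵀ * P = 0)
    {x : ι → ℝ} {q : κ → ℝ} (h : (weightedGram E c + P) *ᵥ x = E *ᵥ q) :
    weightedGram E c *ᵥ x = E *ᵥ q := by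
  rw [add_mulVec] at h
  obtain ⟨y, hy⟩ : ∃ y, E *ᵥ y = P *ᵥ x := ⟨q - diagonal c *ᵥ Eᵀ *ᵥ x, by
    rw [mulVec_sub, ← h, mulVec_mulVec, mulVec_mulVec, ← weightedGram, add_sub_cancel_left]⟩
  have hPx : P *ᵥ x = 0 := by
    refine dotProduct_self_eq_zero.mp ?_
    calc P *ᵥ x ⬝ᵥ P *ᵥ x = P *ᵥ x ⬝ᵥ E *ᵥ y := by rw [hy]
      _ = Eᵀ *ᵥ P *ᵥ x ⬝ᵥ y := by rw [dotProduct_mulVec, mulVec_transpose]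
      _ = 0 := by rw [mulVec_mulVec, hEP, zero_mulVec, zero_dotProduct]
  rwa [hPx, add_zero] at h

section Inverse

variable [DecidableEq ι] {P : Matrix ι ι ℝ}

theorem weightedGram_mulVec_inv_add_mulVec (hc : ∀ e, 0 < c e) (hP : P.PosSemidef)
    (hEP : Eᵀ * P = 0) (hPker : ∀ x, Eᵀ *ᵥ x = 0 → P *ᵥ x = x) (q : κ → ℝ) :
    weightedGram E c *ᵥ (weightedGram E c + P)⁻¹ *ᵥ E *ᵥ q = E *ᵥ q := by
  have hdet := (isUnit_iff_isUnit_det _).mp (posDef_weightedGram_add hc hP hPker).isUnit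
  refine weightedGram_mulVec_eq_of_add_mulVec_eq hEP ?_
  rw [mulVec_mulVec, mul_nonsing_inv _ hdet, one_mulVec]

theorem sSup_dotProduct_sub_half_dotProduct_weightedGram_mulVec (hc : ∀ e, 0 < c e)
    (hP : P.PosSemidef) (hEP : Eᵀ * P = 0) (hPker : ∀ x, Eᵀ *ᵥ x = 0 → P *ᵥ x = x)
    (q : κ → ℝ) :
    sSup (Set.range fun u => E *ᵥ q ⬝ᵥ u - 1 / 2 * (u ⬝ᵥ weightedGram E c *ᵥ u))
      = 1 / 2 * (E *ᵥ q ⬝ᵥ (weightedGram E c + P)⁻¹ *ᵥ E *ᵥ q) :=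
  ((posSemidef_weightedGram fun e => (hc e).le).isGreatest_dotProduct_sub_half_dotProduct_mulVec
    (weightedGram_mulVec_inv_add_mulVec hc hP hEP hPker q)).csSup_eq

theorem hasFDerivAt_dotProduct_inv_weightedGram_add_mulVec (hPt : Pᵀ = P)
    (hunit : IsUnit (weightedGram E c + P)) (b : ι → ℝ) :
    HasFDerivAt (fun c' => b ⬝ᵥ (weightedGram E c' + P)⁻¹ *ᵥ b)
      (-∑ e, ((Eᵀ *ᵥ (weightedGram E c + P)⁻¹ *ᵥ b) e ^ 2) •
        (ContinuousLinearMap.proj e : (κ → ℝ) →L[ℝ] ℝ)) c := by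
  let Φ : (κ → ℝ) →L[ℝ] Matrix ι ι ℝ := LinearMap.toContinuousLinearMap
    { toFun := weightedGram E
      map_add' c₁ c₂ := by
        simp only [weightedGram, ← Matrix.add_mul, ← Matrix.mul_add, diagonal_add]
        rfl
      map_smul' r c' := by simp [weightedGram, diagonal_smul] }
  have hsymm : (weightedGram E c + P)ᵀ = weightedGram E c + P := by
    rw [transpose_add, weightedGram_transpose, hPt]
  refine ((Φ.hasFDerivAt.add_const P).dotProduct_nonsing_inv_mulVec hunit hsymm b).congr_fderiv ?_
  ext h
  change -((weightedGram E c + P)⁻¹ *ᵥ b ⬝ᵥ weightedGram E h *ᵥ (weightedGram E c + P)⁻¹ *ᵥ b)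
    = _
  rw [dotProduct_weightedGram_mulVec]
  simp [sq, mul_comm]

end Inverse

end Matrix

section TransformedLyapunov

variable {ι κ : Type*} [Fintype ι] [Fintype κ] [DecidableEq ι] [DecidableEq κ]

/-- For `b ∈ range E` and `P` the orthogonal projection onto `ker Eᵀ`, this is the transformed
Lyapunov functional wherever no `s e` vanishes. -/
noncomputable def regularizedLyapunov (E : Matrix ι κ ℝ) (w : κ → ℝ) (P : Matrix ι ι ℝ)
    (b : ι → ℝ) (s : κ → ℝ) : ℝ :=
  1 / 2 * (b ⬝ᵥ (weightedGram E (fun e => s e ^ 2 / 4 / w e) + P)⁻¹ *ᵥ b)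
    + 1 / 8 * ∑ e, w e * s e ^ 2

theorem hasFDerivAt_regularizedLyapunov {E : Matrix ι κ ℝ} {w : κ → ℝ} (hw : ∀ e, 0 < w e)
    {P : Matrix ι ι ℝ} (hP : P.PosSemidef) (hPker : ∀ x, Eᵀ *ᵥ x = 0 → P *ᵥ x = x) (b : ι → ℝ)
    {σ : κ → ℝ} (hσ : ∀ e, σ e ≠ 0) :
    HasFDerivAt (regularizedLyapunov E w P b)
      (∑ e, (w e * σ e / 4 *
          (1 - ((Eᵀ *ᵥ (weightedGram E (fun e => σ e ^ 2 / 4 / w e) + P)⁻¹ *ᵥ b) e / w e) ^ 2)) •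
        (ContinuousLinearMap.proj e : (κ → ℝ) →L[ℝ] ℝ)) σ := by
  have hproj (e : κ) : HasFDerivAt (fun s : κ → ℝ => s e) (ContinuousLinearMap.proj e) σ :=
    hasFDerivAt_apply (𝕜 := ℝ) e σ
  have hc : HasFDerivAt (fun s e => s e ^ 2 / 4 / w e)
      (ContinuousLinearMap.pi fun e =>
        (σ e / 2 / w e) • (ContinuousLinearMap.proj e : (κ → ℝ) →L[ℝ] ℝ)) σ := by
    refine hasFDerivAt_pi'' fun e => ?_
    refine ((((hproj e).pow 2).mul_const (1 / 4 / w e)).congr_fderiv ?_).congr_of_eventuallyEq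
      (.of_forall fun s => by ring)
    ext h
    simp only [_root_.smul_apply, ContinuousLinearMap.proj_apply, ContinuousLinearMap.proj_pi,
      smul_eq_mul, nsmul_eq_mul]
    ring
  have hunit := (posDef_weightedGram_add (c := fun e => σ e ^ 2 / 4 / w e)
    (fun e => by have := hσ e; have := hw e; positivity) hP hPker).isUnit
  have hPt : Pᵀ = P := by simpa using hP.isHermitian.eq
  have hF := (((hasFDerivAt_dotProduct_inv_weightedGram_add_mulVec hPt hunit b).comp σ
    hc).const_mul (1 / 2)).add
    ((HasFDerivAt.fun_sum (u := Finset.univ) fun e _ => ((hproj e).pow 2).const_mul (w e)).const_mul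
      (1 / 8))
  refine hF.congr_fderiv ?_
  ext h
  simp only [_root_.add_apply, _root_.smul_apply, ContinuousLinearMap.comp_apply,
    _root_.neg_apply, _root_.sum_apply, ContinuousLinearMap.pi_apply,
    ContinuousLinearMap.proj_apply, smul_eq_mul, Finset.mul_sum, ← Finset.sum_neg_distrib,
    ← Finset.sum_add_distrib]
  refine Finset.sum_congr rfl fun e _ => ?_
  field_simp [(hw e).ne']
  ring

end TransformedLyapunov

theorem transformed_lyapunov_gradient_general {n m : ℕ}
    (E : Matrix (Fin n) (Fin m) ℝ) (w : Fin m → ℝ) (hw : ∀ e, 0 < w e)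
    (b : Fin n → ℝ)
    (G : Matrix (Fin m) (Fin n) ℝ) (hG : G = (Matrix.diagonal w)⁻¹ * Eᵀ)
    (hb : ∃ q₀ : Fin m → ℝ, E.mulVec q₀ = b)
    (σ : Fin m → ℝ) (hσ : ∀ e, σ e ≠ 0)
    (μ : Fin m → ℝ) (hμ : μ = fun e => (σ e)^2 / 4)
    (u : Fin n → ℝ) (hu : (E * Matrix.diagonal μ * G).mulVec u = b)
    (Lhat : (Fin m → ℝ) → ℝ)
    (hLhat : ∀ σ', Lhat σ' =
      sSup (Set.range fun u' : Fin n → ℝ =>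
        b ⬝ᵥ u' - (1/2) * (u' ⬝ᵥ
          (E * Matrix.diagonal (fun e => (σ' e)^2 / 4) * G).mulVec u'))
      + (1/8) * ∑ e, w e * (σ' e)^2) :
    HasFDerivAt Lhat
      (∑ e : Fin m, (w e * σ e / 4 * (1 - (G.mulVec u e)^2)) •
        (ContinuousLinearMap.proj e : (Fin m → ℝ) →L[ℝ] ℝ)) σ := by
  obtain ⟨q, rfl⟩ := hb
  subst hG hμ
  obtain ⟨P, hP, hEP, hPker⟩ := exists_posSemidef_projection_ker Eᵀ
  have hw₀ (e : Fin m) : w e ≠ 0 := (hw e).ne'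
  have hc {s : Fin m → ℝ} (hs : ∀ e, s e ≠ 0) (e : Fin m) : 0 < s e ^ 2 / 4 / w e := by
    have := hs e; have := hw e; positivity
  simp only [mul_diagonal_mul_inv_diagonal_mul_transpose E hw₀, inv_diagonal_mul_mulVec hw₀]
    at hLhat hu ⊢
  have hLhat_eq : Lhat =ᶠ[𝓝 σ] regularizedLyapunov E w P (E *ᵥ q) := by
    filter_upwards [eventually_all.2 fun e =>
      (continuous_apply e).continuousAt.eventually_ne (hσ e)] with s hs
    rw [hLhat, regularizedLyapunov,
      sSup_dotProduct_sub_half_dotProduct_weightedGram_mulVec (hc hs) hP hEP hPker]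
  have hEu : Eᵀ *ᵥ u = Eᵀ *ᵥ (weightedGram E (fun e => σ e ^ 2 / 4 / w e) + P)⁻¹ *ᵥ E *ᵥ q :=
    transpose_mulVec_eq_of_weightedGram_mulVec_eq (hc hσ) <| by
      rw [hu, weightedGram_mulVec_inv_add_mulVec (hc hσ) hP hEP hPker]
  rw [hEu]
  exact (hasFDerivAt_regularizedLyapunov hw hP hPker _ hσ).congr_of_eventuallyEq hLhat_eq

/-- Gradient of the transformed Lyapunov functional with `Ψ(σ) = σ²/4`: if `b` is in the
range of `E`, `σ_e ≠ 0` for all `e`, `μ = σ²/4` and `L[μ] u = b`, then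
`𝓛̂(σ') = sup_{u'} (bᵀu' − ½ u'ᵀ L[σ'²/4] u') + ⅛ Σ_e w_e σ'_e²` is differentiable at `σ`
with gradient entries `(w_e σ_e / 4)(1 − ((G u)_e)²)`. Here `G = W⁻¹Eᵀ`,
`L[μ] = E Diag(μ) G`. -/
theorem transformed_lyapunov_gradient {n m : ℕ} (hn : 0 < n) (hm : 0 < m)
    (E : Matrix (Fin n) (Fin m) ℝ) (w : Fin m → ℝ) (hw : ∀ e, 0 < w e)
    (b : Fin n → ℝ)
    (G : Matrix (Fin m) (Fin n) ℝ) (hG : G = (Matrix.diagonal w)⁻¹ * Eᵀ)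
    (hb : ∃ q₀ : Fin m → ℝ, E.mulVec q₀ = b)
    (σ : Fin m → ℝ) (hσ : ∀ e, σ e ≠ 0)
    (μ : Fin m → ℝ) (hμ : μ = fun e => (σ e)^2 / 4)
    (u : Fin n → ℝ) (hu : (E * Matrix.diagonal μ * G).mulVec u = b)
    (Lhat : (Fin m → ℝ) → ℝ)
    (hLhat : ∀ σ', Lhat σ' =
      sSup (Set.range fun u' : Fin n → ℝ =>
        b ⬝ᵥ u' - (1/2) * (u' ⬝ᵥ
          (E * Matrix.diagonal (fun e => (σ' e)^2 / 4) * G).mulVec u'))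
      + (1/8) * ∑ e, w e * (σ' e)^2) :
    HasFDerivAt Lhat
      (∑ e : Fin m, (w e * σ e / 4 * (1 - (G.mulVec u e)^2)) •
        (ContinuousLinearMap.proj e : (Fin m → ℝ) →L[ℝ] ℝ)) σ :=
  transformed_lyapunov_gradient_general E w hw b G hG hb σ hσ μ hμ u hu Lhat hLhat
end

section
/- First factorization of the Newton saddle-point Jacobian: let σ ∈ ℝ^m, u ∈ ℝ^n, Δt > 0, set μ = σ²/4 and g = G u. Define the blocks A = E Diag(μ) G, B = ½ Diag(g ⊙ σ) Eᵀ, C = Diag( w ⊙ ( 1/Δt − ¼(g² − 1) ) ), and the (n+m)×(n+m) block matrix J = [[A, Bᵀ],[B, −C]]. Define Z = [[E W^{−1/2}, 0],[0, W^{1/2}]] (blocks of sizes n×m and m×m) and 𝒲 = [[Diag(μ), ½Diag(σ ⊙ g)],[½Diag(σ ⊙ g), −Diag( 1/Δt − ¼(g² − 1) )]]. Then J = Z 𝒲 Zᵀ. -/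
open Matrix BigOperators

theorem dmul_assoc {m : ℕ} {α : Type*} (d1 d2 : Fin m → ℝ) (X : Matrix (Fin m) α ℝ) :
    Matrix.diagonal d1 * (Matrix.diagonal d2 * X) = Matrix.diagonal (fun e => d1 e * d2 e) * X := by
  rw [← Matrix.mul_assoc, Matrix.diagonal_mul_diagonal]


/-- First factorization of the Newton saddle-point Jacobian: with `μ = σ²/4`, `g = G u`,
blocks `A = E Diag(μ) G`, `B = ½ Diag(g ⊙ σ) Eᵀ`,
`C = Diag(w ⊙ (1/Δt − ¼(g² − 1)))`, `J = [[A, Bᵀ], [B, −C]]`,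
`Z = [[E W^{−1/2}, 0], [0, W^{1/2}]]` and
`𝒲 = [[Diag(μ), ½Diag(σ ⊙ g)], [½Diag(σ ⊙ g), −Diag(1/Δt − ¼(g² − 1))]]`,
one has `J = Z 𝒲 Zᵀ`. Here `G = W⁻¹Eᵀ`, `W = Diag w`. -/
theorem jacobian_factorization_W {n m : ℕ} (hn : 0 < n) (hm : 0 < m)
    (E : Matrix (Fin n) (Fin m) ℝ) (w : Fin m → ℝ) (hw : ∀ e, 0 < w e)
    (G : Matrix (Fin m) (Fin n) ℝ) (hG : G = (Matrix.diagonal w)⁻¹ * Eᵀ)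
    (σ : Fin m → ℝ) (u : Fin n → ℝ) (Δt : ℝ) (hΔt : 0 < Δt)
    (μ : Fin m → ℝ) (hμ : μ = fun e => (σ e)^2 / 4)
    (g : Fin m → ℝ) (hg : g = G.mulVec u)
    (A : Matrix (Fin n) (Fin n) ℝ) (hA : A = E * Matrix.diagonal μ * G)
    (B : Matrix (Fin m) (Fin n) ℝ)
    (hB : B = (1/2 : ℝ) • (Matrix.diagonal (fun e => g e * σ e) * Eᵀ))
    (C : Matrix (Fin m) (Fin m) ℝ)
    (hC : C = Matrix.diagonal (fun e => w e * (1/Δt - (1/4) * ((g e)^2 - 1))))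
    (J : Matrix (Fin n ⊕ Fin m) (Fin n ⊕ Fin m) ℝ)
    (hJ : J = Matrix.fromBlocks A Bᵀ B (-C))
    (Z : Matrix (Fin n ⊕ Fin m) (Fin m ⊕ Fin m) ℝ)
    (hZ : Z = Matrix.fromBlocks
      (E * Matrix.diagonal (fun e => (Real.sqrt (w e))⁻¹)) 0
      0 (Matrix.diagonal fun e => Real.sqrt (w e)))
    (Wc : Matrix (Fin m ⊕ Fin m) (Fin m ⊕ Fin m) ℝ)
    (hWc : Wc = Matrix.fromBlocks
      (Matrix.diagonal μ) ((1/2 : ℝ) • Matrix.diagonal (fun e => σ e * g e))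
      ((1/2 : ℝ) • Matrix.diagonal (fun e => σ e * g e))
      (-(Matrix.diagonal fun e => 1/Δt - (1/4) * ((g e)^2 - 1)))) :
    J = Z * Wc * Zᵀ := by
  subst hG hμ hA hB hC hJ hZ hWc
  have hwinv : (Matrix.diagonal w)⁻¹ = Matrix.diagonal (fun e => (w e)⁻¹) := by
    apply Matrix.inv_eq_right_inv
    rw [Matrix.diagonal_mul_diagonal]
    convert Matrix.diagonal_one
    exact mul_inv_cancel₀ (hw _).ne'
  have hs : ∀ e, Real.sqrt (w e) * Real.sqrt (w e) = w e := fun e =>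
    Real.mul_self_sqrt (hw e).le
  have hsne : ∀ e, Real.sqrt (w e) ≠ 0 := fun e => (Real.sqrt_pos.2 (hw e)).ne'
  rw [hwinv, Matrix.fromBlocks_transpose, Matrix.fromBlocks_multiply, Matrix.fromBlocks_multiply]
  simp only [Matrix.transpose_mul, Matrix.transpose_smul, Matrix.diagonal_transpose,
    Matrix.mul_zero, Matrix.zero_mul, add_zero, zero_add, smul_zero, neg_zero,
    Matrix.smul_mul, Matrix.mul_smul, Matrix.mul_assoc, Matrix.diagonal_mul_diagonal,
    Matrix.neg_mul, Matrix.mul_neg, Matrix.diagonal_neg, Matrix.transpose_zero,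
    Matrix.transpose_transpose, dmul_assoc]
  have h1 : (fun e => (Real.sqrt (w e))⁻¹ * ((σ e) ^ 2 / 4) * (Real.sqrt (w e))⁻¹)
      = fun e => (σ e) ^ 2 / 4 * (w e)⁻¹ := by
    funext e; conv_rhs => rw [← hs e]
    field_simp
  have h2 : (fun e => (Real.sqrt (w e))⁻¹ * (σ e * g e) * Real.sqrt (w e))
      = fun e => g e * σ e := by
    funext e; field_simp [hsne e]
  have h3 : (fun e => Real.sqrt (w e) * (σ e * g e) * (Real.sqrt (w e))⁻¹)
      = fun e => g e * σ e := by
    funext e; field_simp [hsne e]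
  have h4 : (fun e => Real.sqrt (w e) * -(1/Δt - 1/4 * ((g e) ^ 2 - 1)) * Real.sqrt (w e))
      = fun e => -(w e * (1/Δt - 1/4 * ((g e) ^ 2 - 1))) := by
    funext e; conv_rhs => rw [← hs e]
    ring
  rw [h1, h2, h3, h4]
end

section
/- Schur complement of the saddle-point Jacobian is a weighted Laplacian: let σ ∈ ℝ^m, u ∈ ℝ^n, Δt > 0, set μ = σ²/4 and g = G u, and assume 1 − (Δt/4)(g_e² − 1) > 0 for every e. With A = E Diag(μ) G, B = ½ Diag(g ⊙ σ) Eᵀ and C = Diag( w ⊙ ( 1/Δt − ¼(g² − 1) ) ) (which is invertible), the Schur complement S = A + Bᵀ C⁻¹ B satisfies S = E Diag(μ̄) W⁻¹ Eᵀ, where μ̄ ∈ ℝ^m has entries μ̄_e = μ_e + Δt (½ σ_e g_e)² / ( 1 − (Δt/4)(g_e² − 1) ). -/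
/-!
All matrices involved are of the form `E * diagonal d * Eᵀ` because `W` and `C` are diagonal, so
the Schur complement only adds weights: `Bᵀ C⁻¹ B` contributes `(½ σₑ gₑ)² / (wₑ cₑ)` with
`cₑ = 1/Δt − ¼(gₑ² − 1) = (1 − (Δt/4)(gₑ² − 1)) / Δt`, which is nonzero by the positivity
assumption; factoring out `W⁻¹` gives the weights `μ̄`.
-/

open Matrix BigOperators

namespace Matrix

variable {ι κ K : Type*} [Fintype ι] [DecidableEq ι] [Field K]

theorem inv_diagonal_of_ne_zero {d : ι → K} (hd : ∀ i, d i ≠ 0) :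
    (diagonal d)⁻¹ = diagonal d⁻¹ :=
  inv_eq_right_inv <| by
    rw [diagonal_mul_diagonal, ← diagonal_one]
    exact congrArg diagonal (funext fun i => mul_inv_cancel₀ (hd i))

theorem mul_diagonal_mul_diagonal_mul {α : Type*} [CommSemiring α] (M : Matrix κ ι α)
    (N : Matrix ι κ α) (a b : ι → α) :
    M * diagonal a * (diagonal b * N) = M * diagonal (a * b) * N := by
  rw [Matrix.mul_assoc, ← Matrix.mul_assoc (diagonal a), diagonal_mul_diagonal, ← Matrix.mul_assoc]
  rfl

theorem schur_complement_diagonal_weights (E : Matrix κ ι K) {w c : ι → K}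
    (hw : ∀ i, w i ≠ 0) (hc : ∀ i, c i ≠ 0) (a b : ι → K) :
    E * diagonal a * ((diagonal w)⁻¹ * Eᵀ)
        + (diagonal b * Eᵀ)ᵀ * (diagonal (w * c))⁻¹ * (diagonal b * Eᵀ)
      = E * diagonal (fun i => a i + b i ^ 2 / c i) * (diagonal w)⁻¹ * Eᵀ := by
  have hwc : ∀ i, (w * c) i ≠ 0 := fun i => mul_ne_zero (hw i) (hc i)
  rw [inv_diagonal_of_ne_zero hw, inv_diagonal_of_ne_zero hwc, transpose_mul,
    transpose_transpose, diagonal_transpose, mul_diagonal_mul_diagonal_mul,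
    Matrix.mul_assoc E (diagonal b), diagonal_mul_diagonal, mul_diagonal_mul_diagonal_mul,
    Matrix.mul_assoc E (diagonal _) (diagonal w⁻¹), diagonal_mul_diagonal, ← Matrix.add_mul,
    ← Matrix.mul_add, diagonal_add]
  congr 3
  funext i
  simp only [Pi.mul_apply, Pi.inv_apply]
  field_simp [hw i, hc i]

end Matrix

theorem one_div_sub_quarter_mul_eq {K : Type*} [Field K] {Δt : K} (hΔt : Δt ≠ 0) (q : K) :
    1 / Δt - (1 / 4) * q = (1 - (Δt / 4) * q) / Δt := by
  field_simp

theorem schur_complement_weighted_laplacian_general {n m : ℕ}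
    (E : Matrix (Fin n) (Fin m) ℝ) (w : Fin m → ℝ) (hw : ∀ e, 0 < w e)
    (G : Matrix (Fin m) (Fin n) ℝ) (hG : G = (Matrix.diagonal w)⁻¹ * Eᵀ)
    (σ : Fin m → ℝ) (Δt : ℝ) (hΔt : 0 < Δt)
    (μ : Fin m → ℝ)
    (g : Fin m → ℝ)
    (hpos : ∀ e, 0 < 1 - (Δt/4) * ((g e)^2 - 1))
    (A : Matrix (Fin n) (Fin n) ℝ) (hA : A = E * Matrix.diagonal μ * G)
    (B : Matrix (Fin m) (Fin n) ℝ)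
    (hB : B = (1/2 : ℝ) • (Matrix.diagonal (fun e => g e * σ e) * Eᵀ))
    (C : Matrix (Fin m) (Fin m) ℝ)
    (hC : C = Matrix.diagonal (fun e => w e * (1/Δt - (1/4) * ((g e)^2 - 1))))
    (μbar : Fin m → ℝ)
    (hμbar : μbar = fun e =>
      μ e + Δt * ((1/2) * σ e * g e)^2 / (1 - (Δt/4) * ((g e)^2 - 1))) :
    IsUnit C ∧
    A + Bᵀ * C⁻¹ * B = E * Matrix.diagonal μbar * (Matrix.diagonal w)⁻¹ * Eᵀ := by
  have hc : ∀ e, 1 / Δt - (1 / 4) * ((g e)^2 - 1) ≠ 0 := fun e => by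
    rw [one_div_sub_quarter_mul_eq hΔt.ne']
    exact div_ne_zero (hpos e).ne' hΔt.ne'
  have hB' : B = diagonal (fun e => (1 / 2) * (g e * σ e)) * Eᵀ := by
    rw [hB, ← Matrix.smul_mul, ← diagonal_smul]
    rfl
  have hμbar' : μbar = fun e =>
      μ e + ((1 / 2) * (g e * σ e)) ^ 2 / (1 / Δt - (1 / 4) * ((g e)^2 - 1)) := by
    rw [hμbar]
    funext e
    rw [one_div_sub_quarter_mul_eq hΔt.ne', div_div_eq_mul_div]
    ring
  refine ⟨?_, ?_⟩
  · rw [hC, isUnit_diagonal, Pi.isUnit_iff]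
    exact fun e => (mul_ne_zero (hw e).ne' (hc e)).isUnit
  · rw [hA, hG, hB', hC, hμbar']
    exact schur_complement_diagonal_weights E (fun e => (hw e).ne') hc μ _

/-- Schur complement of the saddle-point Jacobian is a weighted Laplacian: with
`μ = σ²/4`, `g = G u`, and `1 − (Δt/4)(g_e² − 1) > 0` for all `e`, the matrix
`C = Diag(w ⊙ (1/Δt − ¼(g² − 1)))` is invertible and the Schur complement
`S = A + Bᵀ C⁻¹ B` equals `E Diag(μ̄) W⁻¹ Eᵀ` where
`μ̄_e = μ_e + Δt (½ σ_e g_e)² / (1 − (Δt/4)(g_e² − 1))`.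
Here `G = W⁻¹Eᵀ`, `A = E Diag(μ) G`, `B = ½ Diag(g ⊙ σ) Eᵀ`. -/
theorem schur_complement_weighted_laplacian {n m : ℕ} (hn : 0 < n) (hm : 0 < m)
    (E : Matrix (Fin n) (Fin m) ℝ) (w : Fin m → ℝ) (hw : ∀ e, 0 < w e)
    (G : Matrix (Fin m) (Fin n) ℝ) (hG : G = (Matrix.diagonal w)⁻¹ * Eᵀ)
    (σ : Fin m → ℝ) (u : Fin n → ℝ) (Δt : ℝ) (hΔt : 0 < Δt)
    (μ : Fin m → ℝ) (hμ : μ = fun e => (σ e)^2 / 4)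
    (g : Fin m → ℝ) (hg : g = G.mulVec u)
    (hpos : ∀ e, 0 < 1 - (Δt/4) * ((g e)^2 - 1))
    (A : Matrix (Fin n) (Fin n) ℝ) (hA : A = E * Matrix.diagonal μ * G)
    (B : Matrix (Fin m) (Fin n) ℝ)
    (hB : B = (1/2 : ℝ) • (Matrix.diagonal (fun e => g e * σ e) * Eᵀ))
    (C : Matrix (Fin m) (Fin m) ℝ)
    (hC : C = Matrix.diagonal (fun e => w e * (1/Δt - (1/4) * ((g e)^2 - 1))))
    (μbar : Fin m → ℝ)
    (hμbar : μbar = fun e =>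
      μ e + Δt * ((1/2) * σ e * g e)^2 / (1 - (Δt/4) * ((g e)^2 - 1))) :
    IsUnit C ∧
    A + Bᵀ * C⁻¹ * B = E * Matrix.diagonal μbar * (Matrix.diagonal w)⁻¹ * Eᵀ :=
  schur_complement_weighted_laplacian_general E w hw G hG σ Δt hΔt μ g hpos A hA B hB C hC μbar
    hμbar
end

section
/- Single-source shortest path as an optimal transport dual: let G be a finite connected simple graph on vertex set V with n = |V| ≥ 2 vertices, w a positive weight on the edges of G, and for vertices a, v let d(a,v) be the infimum over all walks from a to v of the sum of the weights of their edges. Fix a vertex v₁ and define b ∈ ℝ^V by b_{v₁} = −1 and b_v = 1/(n−1) for v ≠ v₁. Then the supremum of Σ_{v ∈ V} b_v u_v over all u ∈ ℝ^V satisfying |u_i − u_j| ≤ w({i,j}) for every edge {i,j} of G is attained at u = d(v₁,·) and equals (1/(n−1)) Σ_{v ≠ v₁} d(v₁, v). -/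
/-!
A feasible potential `u` telescopes along every walk, so `u v - u v₁ ≤ d(v₁, v)`. Since `b` sums to
zero and is nonnegative away from `v₁`, this gives `∑ b u = ∑ b (u - u v₁) ≤ ∑ b d(v₁, ·)`. The bound
is attained because `d(v₁, ·)` is itself feasible: `d(v₁, j) ≤ d(v₁, i) + w(ij)` for every edge `ij`.
-/

open Finset

namespace SimpleGraph

variable {V : Type*} {G : SimpleGraph V} {w : Sym2 V → ℝ}

def Walk.weight (w : Sym2 V → ℝ) {a v : V} (p : G.Walk a v) : ℝ := (p.edges.map w).sum

@[simp]
lemma Walk.weight_nil {a : V} : (Walk.nil : G.Walk a a).weight w = 0 := by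
  simp [Walk.weight]

@[simp]
lemma Walk.weight_cons {a b c : V} (h : G.Adj a b) (p : G.Walk b c) :
    (Walk.cons h p).weight w = w s(a, b) + p.weight w := by
  simp [Walk.weight]

lemma Walk.weight_concat {a b c : V} (p : G.Walk a b) (h : G.Adj b c) :
    (p.concat h).weight w = p.weight w + w s(b, c) := by
  simp [Walk.weight, Walk.edges_concat]

lemma Walk.weight_nonneg (hw : ∀ e ∈ G.edgeSet, 0 ≤ w e) {a v : V} (p : G.Walk a v) :
    0 ≤ p.weight w :=
  List.sum_nonneg fun _ hx => by
    obtain ⟨e, he, rfl⟩ := List.mem_map.mp hx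
    exact hw e (p.edges_subset_edgeSet he)

/-- Feasibility of a potential `u` in the dual transport problem. -/
def IsEdgeLipschitz (G : SimpleGraph V) (w : Sym2 V → ℝ) (u : V → ℝ) : Prop :=
  ∀ i j, G.Adj i j → |u i - u j| ≤ w s(i, j)

lemma IsEdgeLipschitz.sub_le_weight {u : V → ℝ} (hu : G.IsEdgeLipschitz w u) {a v : V}
    (p : G.Walk a v) : u v - u a ≤ p.weight w := by
  induction p with
  | nil => simp
  | cons h p ih =>
    rw [Walk.weight_cons]
    linarith [(abs_le.mp (hu _ _ h)).1]

noncomputable def walkDist (G : SimpleGraph V) (w : Sym2 V → ℝ) (a v : V) : ℝ :=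
  sInf {r : ℝ | ∃ p : G.Walk a v, r = p.weight w}

lemma walkDist_le_weight (hw : ∀ e ∈ G.edgeSet, 0 ≤ w e) {a v : V} (p : G.Walk a v) :
    G.walkDist w a v ≤ p.weight w :=
  csInf_le ⟨0, by rintro _ ⟨q, rfl⟩; exact q.weight_nonneg hw⟩ ⟨p, rfl⟩

lemma le_walkDist {a v : V} (hr : G.Reachable a v) {c : ℝ} (hc : ∀ p : G.Walk a v, c ≤ p.weight w) :
    c ≤ G.walkDist w a v :=
  le_csInf (hr.elim fun p => ⟨_, p, rfl⟩) (by rintro _ ⟨p, rfl⟩; exact hc p)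

lemma walkDist_nonneg (hw : ∀ e ∈ G.edgeSet, 0 ≤ w e) (a v : V) : 0 ≤ G.walkDist w a v :=
  Real.sInf_nonneg (by rintro _ ⟨p, rfl⟩; exact p.weight_nonneg hw)

lemma walkDist_self (hw : ∀ e ∈ G.edgeSet, 0 ≤ w e) (a : V) : G.walkDist w a a = 0 :=
  le_antisymm (by simpa using walkDist_le_weight hw (Walk.nil : G.Walk a a))
    (walkDist_nonneg hw a a)

lemma walkDist_le_add_of_adj (hw : ∀ e ∈ G.edgeSet, 0 ≤ w e) {a i j : V} (hr : G.Reachable a i)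
    (h : G.Adj i j) : G.walkDist w a j ≤ G.walkDist w a i + w s(i, j) := by
  have : G.walkDist w a j - w s(i, j) ≤ G.walkDist w a i := le_walkDist hr fun p => by
    linarith [walkDist_le_weight hw (p.concat h), p.weight_concat (w := w) h]
  linarith

lemma isEdgeLipschitz_walkDist (hw : ∀ e ∈ G.edgeSet, 0 ≤ w e) (hconn : G.Connected) (a : V) :
    G.IsEdgeLipschitz w (G.walkDist w a) := fun i j h => by
  have hij := walkDist_le_add_of_adj hw (hconn a i) h
  have hji := walkDist_le_add_of_adj hw (hconn a j) h.symm
  rw [Sym2.eq_swap] at hji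
  exact abs_sub_le_iff.mpr ⟨by linarith, by linarith⟩

lemma IsEdgeLipschitz.sub_le_walkDist {u : V → ℝ} (hu : G.IsEdgeLipschitz w u) {a v : V}
    (hr : G.Reachable a v) : u v - u a ≤ G.walkDist w a v :=
  le_walkDist hr hu.sub_le_weight

end SimpleGraph

section TransportDual

variable {V : Type*} [Fintype V]

lemma sum_mul_le_sum_mul_of_sub_le {b u f : V → ℝ} {v₁ : V} (hb : ∑ v, b v = 0)
    (hb_nonneg : ∀ v ≠ v₁, 0 ≤ b v) (hf : f v₁ = 0) (huf : ∀ v, u v - u v₁ ≤ f v) :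
    ∑ v, b v * u v ≤ ∑ v, b v * f v :=
  calc ∑ v, b v * u v = ∑ v, b v * (u v - u v₁) := by
        simp only [mul_sub, sum_sub_distrib, ← sum_mul, hb, zero_mul, sub_zero]
    _ ≤ ∑ v, b v * f v := sum_le_sum fun v _ => by
        by_cases hv : v = v₁
        · subst hv; simp [hf]
        · exact mul_le_mul_of_nonneg_left (huf v) (hb_nonneg v hv)

variable [DecidableEq V]

lemma sum_ite_eq_neg_one_else (v₁ : V) (c : ℝ) :
    ∑ v, (if v = v₁ then (-1 : ℝ) else c) = ((Fintype.card V : ℝ) - 1) * c - 1 := by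
  rw [← sum_erase_add _ _ (mem_univ v₁), if_pos rfl,
    sum_ite_of_false fun v hv => ne_of_mem_erase hv, sum_const,
    card_erase_of_mem (mem_univ v₁), card_univ, nsmul_eq_mul,
    Nat.cast_sub (Fintype.card_pos_iff.mpr ⟨v₁⟩)]
  ring

lemma sum_ite_eq_neg_one_else_mul {v₁ : V} (c : ℝ) {f : V → ℝ} (hf : f v₁ = 0) :
    ∑ v, (if v = v₁ then (-1 : ℝ) else c) * f v = c * ∑ v ∈ univ.erase v₁, f v := by
  rw [← sum_erase_add _ _ (mem_univ v₁), hf, mul_zero, add_zero, mul_sum]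
  exact sum_congr rfl fun v hv => by rw [if_neg (ne_of_mem_erase hv)]

end TransportDual

/-- Single-source shortest path as an optimal transport dual: on a finite connected
weighted simple graph with `n ≥ 2` vertices, with `b_{v₁} = −1` and `b_v = 1/(n−1)`
otherwise, the supremum of `Σ_v b_v u_v` over `u` satisfying `|u_i − u_j| ≤ w({i,j})`
for every edge is attained at the shortest-path distance `u = d(v₁,·)` and equals
`(1/(n−1)) Σ_{v ≠ v₁} d(v₁, v)`. -/
theorem sssp_as_ot_dual {V : Type*} [Fintype V] [DecidableEq V]
    (G : SimpleGraph V) (hconn : G.Connected)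
    (hn : 2 ≤ Fintype.card V)
    (w : Sym2 V → ℝ) (hw : ∀ e ∈ G.edgeSet, 0 < w e)
    (d : V → V → ℝ)
    (hd : ∀ a v, d a v = sInf {r : ℝ | ∃ p : G.Walk a v, r = (p.edges.map w).sum})
    (v₁ : V)
    (b : V → ℝ)
    (hb : b = fun v => if v = v₁ then (-1 : ℝ) else 1 / ((Fintype.card V : ℝ) - 1)) :
    (∀ i j, G.Adj i j → |d v₁ i - d v₁ j| ≤ w s(i, j)) ∧
    IsGreatest {r : ℝ | ∃ u : V → ℝ,
        (∀ i j, G.Adj i j → |u i - u j| ≤ w s(i, j)) ∧ r = ∑ v, b v * u v}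
      (∑ v, b v * d v₁ v) ∧
    (∑ v, b v * d v₁ v) =
      (1 / ((Fintype.card V : ℝ) - 1)) * ∑ v ∈ Finset.univ.erase v₁, d v₁ v := by
  obtain rfl : d = G.walkDist w := funext₂ hd
  subst hb
  have hw₀ : ∀ e ∈ G.edgeSet, 0 ≤ w e := fun e he => (hw e he).le
  have hn' : (2 : ℝ) ≤ Fintype.card V := by exact_mod_cast hn
  have hfeas := SimpleGraph.isEdgeLipschitz_walkDist hw₀ hconn v₁
  have hd₀ := SimpleGraph.walkDist_self hw₀ v₁
  refine ⟨hfeas, ⟨⟨_, hfeas, rfl⟩, ?_⟩, sum_ite_eq_neg_one_else_mul _ hd₀⟩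
  rintro _ ⟨u, hu, rfl⟩
  refine sum_mul_le_sum_mul_of_sub_le ?_ (fun v hv => ?_) hd₀
    fun v => SimpleGraph.IsEdgeLipschitz.sub_le_walkDist hu (hconn v₁ v)
  · rw [sum_ite_eq_neg_one_else, mul_one_div_cancel (by linarith), sub_self]
  · rw [if_neg hv]
    exact one_div_nonneg.mpr (by linarith)
end
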